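/- arXiv:2605.17972 — 4 statements merged into one kernel-verified Lean document; each statement's English description precedes it below -/
import Mathlib

section
/- Let x = I + P and y = I + Q be elements of SL₂(R_e) such that all entries of P lie in ϖ^{j−1}R_e and all entries of Q lie in ϖ^{k−1}R_e, for some integers j, k ≥ 2. Then the group commutator (x,y) = xyx^{−1}y^{−1} satisfies (x,y) − I = [P,Q] + tr(P)tr(Q)·I + Θ, where [P,Q] = PQ − QP and Θ ∈ M₂(R_e) has all entries in ϖ^{j+k+min(j,k)−3}R_e. In particular, if j + k − 1 ≤ e, then all entries of (x,y) − I − [P,Q] lie in ϖ^{j+k−1}R_e (equivalently (x,y) ≡ I + [P,Q] mod ϖ^{j+k−1}), so (x,y) reduces to the identity in SL₂(O_K/𝔭^{j+k−2}). -/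
set_option synthInstance.maxHeartbeats 400000
set_option maxHeartbeats 1000000

noncomputable section

namespace Paper

/-- The unipotent upper-triangular subgroup `U = {[[1,x],[0,1]]}` of `SL₂(R)`. -/
def unipotent (R : Type*) [CommRing R] : Subgroup (Matrix.SpecialLinearGroup (Fin 2) R) where
  carrier := {g | g.1 0 0 = 1 ∧ g.1 1 0 = 0 ∧ g.1 1 1 = 1}
  one_mem' := by
    refine ⟨?_, ?_, ?_⟩ <;> simp [Matrix.SpecialLinearGroup.coe_one, Matrix.one_apply]
  mul_mem' := by
    rintro a b ⟨ha1, ha2, ha3⟩ ⟨hb1, hb2, hb3⟩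
    refine ⟨?_, ?_, ?_⟩ <;>
      simp [Matrix.SpecialLinearGroup.coe_mul, Matrix.mul_apply, Fin.sum_univ_two,
        ha1, ha2, ha3, hb1, hb2, hb3]
  inv_mem' := by
    rintro a ⟨h1, h2, h3⟩
    refine ⟨?_, ?_, ?_⟩ <;>
      simp [Matrix.SpecialLinearGroup.coe_inv, Matrix.adjugate_fin_two, h1, h2, h3]

/-- `χ(H) = |H\(G/U)| / [G:H]` for `G = SL₂(R)` acting on `X = G/U`,
`U` the unipotent subgroup: the number of `H`-orbits on `X` divided by the index of `H`. -/
def chi (R : Type*) [CommRing R] (H : Subgroup (Matrix.SpecialLinearGroup (Fin 2) R)) : ℝ :=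
  (Nat.card (Quotient (MulAction.orbitRel H
      (Matrix.SpecialLinearGroup (Fin 2) R ⧸ unipotent R))) : ℝ) / (H.index : ℝ)

variable (K : Type*) [Field K] [NumberField K]

/-- The reduction map `SL₂(𝓞_K/𝔭^e) → SL₂(𝓞_K/𝔭^j)` for `j ≤ e`. -/
def red (𝔭 : Ideal (NumberField.RingOfIntegers K)) (e j : ℕ) (h : j ≤ e) :
    Matrix.SpecialLinearGroup (Fin 2) (NumberField.RingOfIntegers K ⧸ 𝔭 ^ e) →*
      Matrix.SpecialLinearGroup (Fin 2) (NumberField.RingOfIntegers K ⧸ 𝔭 ^ j) :=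
  Matrix.SpecialLinearGroup.map (Ideal.Quotient.factor (S := 𝔭 ^ e) (T := 𝔭 ^ j) (Ideal.pow_le_pow_right h))

/-- A subgroup `H ⊆ SL₂(𝓞_K/𝔭^e)` has exact level `e`:
`H ≠ ρ_{e,e-1}⁻¹(ρ_{e,e-1}(H))` when `e > 1`, and `H ≠ G₁` when `e = 1`. -/
def ExactLevel (𝔭 : Ideal (NumberField.RingOfIntegers K)) (e : ℕ)
    (H : Subgroup (Matrix.SpecialLinearGroup (Fin 2) (NumberField.RingOfIntegers K ⧸ 𝔭 ^ e))) :
    Prop :=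
  if e = 1 then H ≠ ⊤
  else H ≠ Subgroup.comap (red K 𝔭 e (e - 1) (Nat.sub_le e 1))
    (Subgroup.map (red K 𝔭 e (e - 1) (Nat.sub_le e 1)) H)

end Paper

open Paper

/-! In `SL₂` the inverse of `1 + P` is its adjugate `1 + adj P`, where `adj P = tr P • 1 - P`,
and `det (1 + P) = 1 + tr P + det P = 1` makes `tr P = -det P` lie twice as deep as `P`.
Expanding `(1 + P)(1 + Q)(1 + adj P)(1 + adj Q)`, the linear terms together with `P adj P` and
`Q adj Q` add up to `(tr P + det P + tr Q + det Q) • 1 = 0`, the remaining quadratic terms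
collapse to `[P, Q] + tr P tr Q • 1`, and what is left is a sum of products of at least three
of `P, Q, adj P, adj Q`. -/

open Matrix

namespace Ideal

variable {R : Type*} [CommRing R] {n : Type*} [Fintype n] [DecidableEq n] {I J : Ideal R}

theorem mul_mem_matrix_mul {A B : Matrix n n R} (hA : A ∈ I.matrix n) (hB : B ∈ J.matrix n) :
    A * B ∈ (I * J).matrix n := fun a b =>
  _root_.sum_mem fun c _ => mul_mem_mul (hA a c) (hB c b)

theorem mul_mem_matrix_pow_add {A B : Matrix n n R} {a b : ℕ} (hA : A ∈ (I ^ a).matrix n)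
    (hB : B ∈ (I ^ b).matrix n) : A * B ∈ (I ^ (a + b)).matrix n :=
  pow_add I a b ▸ mul_mem_matrix_mul hA hB

theorem matrix_pow_antitone : Antitone fun m : ℕ => (I ^ m).matrix n :=
  fun _ _ h => matrix_monotone n (pow_le_pow_right h)

theorem smul_one_mem_matrix {t : R} (ht : t ∈ I) : t • (1 : Matrix n n R) ∈ I.matrix n :=
  fun a b => I.mul_mem_right ((1 : Matrix n n R) a b) ht

theorem trace_mem_of_mem_matrix {A : Matrix n n R} (hA : A ∈ I.matrix n) : A.trace ∈ I :=
  _root_.sum_mem fun a _ => hA a a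

theorem det_mem_pow_card_of_mem_matrix {A : Matrix n n R} (hA : A ∈ I.matrix n) :
    A.det ∈ I ^ Fintype.card n := by
  rw [det_apply]
  refine _root_.sum_mem fun σ _ => ?_
  rw [Units.smul_def]
  refine Submodule.smul_of_tower_mem _ _ ?_
  simpa using prod_mem_prod (s := Finset.univ) (I := fun _ => I) fun i _ => hA (σ i) i

end Ideal

namespace Matrix

variable {R : Type*} [CommRing R] {I : Ideal R}

theorem adjugate_fin_two_eq_trace_smul_one_sub (A : Matrix (Fin 2) (Fin 2) R) :
    adjugate A = A.trace • (1 : Matrix (Fin 2) (Fin 2) R) - A := by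
  rw [adjugate_fin_two]
  ext a b
  fin_cases a <;> fin_cases b <;> simp [trace_fin_two]

theorem adjugate_one_add_fin_two (A : Matrix (Fin 2) (Fin 2) R) :
    adjugate (1 + A) = 1 + adjugate A := by
  rw [adjugate_fin_two, adjugate_fin_two]
  ext a b
  fin_cases a <;> fin_cases b <;> simp

theorem adjugate_mem_matrix_fin_two {A : Matrix (Fin 2) (Fin 2) R}
    (hA : A ∈ I.matrix (Fin 2)) : adjugate A ∈ I.matrix (Fin 2) := by
  rw [adjugate_fin_two_eq_trace_smul_one_sub]
  exact sub_mem (Ideal.smul_one_mem_matrix (Ideal.trace_mem_of_mem_matrix hA)) hA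

theorem det_one_add_fin_two (A : Matrix (Fin 2) (Fin 2) R) :
    (1 + A).det = 1 + A.trace + A.det := by
  simp only [det_fin_two, add_apply, one_apply_eq, one_apply_ne zero_ne_one,
    one_apply_ne one_ne_zero, zero_add, trace_fin_two]
  ring

theorem trace_eq_neg_det_of_det_one_add_eq_one {A : Matrix (Fin 2) (Fin 2) R}
    (h : (1 + A).det = 1) : A.trace = -A.det := by
  rw [det_one_add_fin_two] at h
  linear_combination h

theorem trace_mem_pow_two_mul_of_det_one_add_eq_one {A : Matrix (Fin 2) (Fin 2) R} {m : ℕ}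
    (h : (1 + A).det = 1) (hA : A ∈ (I ^ m).matrix (Fin 2)) : A.trace ∈ I ^ (2 * m) := by
  rw [trace_eq_neg_det_of_det_one_add_eq_one h, mul_comm, pow_mul]
  exact neg_mem (Ideal.det_mem_pow_card_of_mem_matrix hA)

def commutatorHigherTerms (P Q : Matrix (Fin 2) (Fin 2) R) : Matrix (Fin 2) (Fin 2) R :=
  P * Q * adjugate P + P * Q * adjugate Q + P * adjugate P * adjugate Q
    + Q * adjugate P * adjugate Q + P * Q * adjugate P * adjugate Q

theorem commutatorHigherTerms_mem {P Q : Matrix (Fin 2) (Fin 2) R} {m n : ℕ}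
    (hP : P ∈ (I ^ m).matrix (Fin 2)) (hQ : Q ∈ (I ^ n).matrix (Fin 2)) :
    commutatorHigherTerms P Q ∈ (I ^ (m + n + min m n)).matrix (Fin 2) := by
  have hP' := adjugate_mem_matrix_fin_two hP
  have hQ' := adjugate_mem_matrix_fin_two hQ
  have hPQ := Ideal.mul_mem_matrix_pow_add hP hQ
  refine add_mem (add_mem (add_mem (add_mem ?_ ?_) ?_) ?_) ?_
  · exact Ideal.matrix_pow_antitone (by omega) (Ideal.mul_mem_matrix_pow_add hPQ hP')
  · exact Ideal.matrix_pow_antitone (by omega) (Ideal.mul_mem_matrix_pow_add hPQ hQ')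
  · exact Ideal.matrix_pow_antitone (by omega)
      (Ideal.mul_mem_matrix_pow_add (Ideal.mul_mem_matrix_pow_add hP hP') hQ')
  · exact Ideal.matrix_pow_antitone (by omega)
      (Ideal.mul_mem_matrix_pow_add (Ideal.mul_mem_matrix_pow_add hQ hP') hQ')
  · exact Ideal.matrix_pow_antitone (by omega)
      (Ideal.mul_mem_matrix_pow_add (Ideal.mul_mem_matrix_pow_add hPQ hP') hQ')

theorem one_add_commutator_expansion (P Q : Matrix (Fin 2) (Fin 2) R) :
    (1 + P) * (1 + Q) * (1 + adjugate P) * (1 + adjugate Q) - 1 =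
      (P * Q - Q * P) + (P.trace * Q.trace) • 1 + commutatorHigherTerms P Q
        + ((1 + P).det - 1 + ((1 + Q).det - 1)) • 1 := by
  rw [commutatorHigherTerms, adjugate_fin_two, adjugate_fin_two]
  ext a b
  fin_cases a <;> fin_cases b <;>
    simp [mul_apply, Fin.sum_univ_two, trace_fin_two, det_fin_two, one_apply] <;> ring

namespace SpecialLinearGroup

theorem coe_commutator_sub_one_fin_two (x y : SpecialLinearGroup (Fin 2) R)
    {P Q : Matrix (Fin 2) (Fin 2) R} (hx : x.1 = 1 + P) (hy : y.1 = 1 + Q) :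
    (x * y * x⁻¹ * y⁻¹).1 - 1 =
      (P * Q - Q * P) + (P.trace * Q.trace) • 1 + commutatorHigherTerms P Q := by
  rw [coe_mul, coe_mul, coe_mul, coe_inv, coe_inv, hx, hy, adjugate_one_add_fin_two,
    adjugate_one_add_fin_two, one_add_commutator_expansion, ← hx, ← hy, det_coe, det_coe]
  simp

theorem map_eq_one_of_sub_one_mem_matrix_ker {S : Type*} [CommRing S] {n : Type*} [Fintype n]
    [DecidableEq n] (f : R →+* S) (g : SpecialLinearGroup n R)
    (hg : g.1 - 1 ∈ (RingHom.ker f).matrix n) : map f g = 1 := by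
  ext a b
  have : f (g.1 a b - (1 : Matrix n n R) a b) = 0 := hg a b
  rw [map_sub, sub_eq_zero] at this
  simp [this, one_apply, apply_ite f]

end SpecialLinearGroup

end Matrix

theorem Paper.red_eq_one_of_sub_one_mem {K : Type*} [Field K] [NumberField K]
    {𝔭 : Ideal (NumberField.RingOfIntegers K)} {e i : ℕ} (h : i ≤ e)
    (g : SpecialLinearGroup (Fin 2) (NumberField.RingOfIntegers K ⧸ 𝔭 ^ e))
    (hg : g.1 - 1 ∈ ((𝔭.map (Ideal.Quotient.mk (𝔭 ^ e))) ^ i).matrix (Fin 2)) :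
    red K 𝔭 e i h g = 1 := by
  refine SpecialLinearGroup.map_eq_one_of_sub_one_mem_matrix_ker _ g ?_
  rwa [Ideal.Quotient.factor_ker, Ideal.map_pow]

/-- Lemma `lie-bracket-ring`.
Let `x = I + P`, `y = I + Q` in `SL₂(R_e)` with the entries of `P` (resp. `Q`)
in `ϖ^{j-1}R_e` (resp. `ϖ^{k-1}R_e`), `j,k ≥ 2`.  Then
`(x,y) - I = [P,Q] + tr(P)tr(Q)·I + Θ` with the entries of `Θ` in
`ϖ^{j+k+min(j,k)-3}R_e`; and if `j+k-1 ≤ e` then `(x,y) ≡ I + [P,Q] (mod ϖ^{j+k-1})`,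
so `(x,y)` reduces to the identity in `SL₂(𝓞_K/𝔭^{j+k-2})`. -/
theorem statement7 (K : Type*) [Field K] [NumberField K]
    (𝔭 : Ideal (NumberField.RingOfIntegers K))
    (e j k : ℕ) (hj : 2 ≤ j) (hk : 2 ≤ k)
    (x y : Matrix.SpecialLinearGroup (Fin 2) (NumberField.RingOfIntegers K ⧸ 𝔭 ^ e))
    (P Q : Matrix (Fin 2) (Fin 2) (NumberField.RingOfIntegers K ⧸ 𝔭 ^ e))
    (hx : x.1 = 1 + P) (hy : y.1 = 1 + Q)
    (hP : ∀ a b, P a b ∈ (Ideal.map (Ideal.Quotient.mk (𝔭 ^ e)) 𝔭) ^ (j - 1))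
    (hQ : ∀ a b, Q a b ∈ (Ideal.map (Ideal.Quotient.mk (𝔭 ^ e)) 𝔭) ^ (k - 1)) :
    (∃ Θ : Matrix (Fin 2) (Fin 2) (NumberField.RingOfIntegers K ⧸ 𝔭 ^ e),
      (x * y * x⁻¹ * y⁻¹).1 - 1 =
          (P * Q - Q * P) + (Matrix.trace P * Matrix.trace Q) • (1 : Matrix (Fin 2) (Fin 2) _)
            + Θ ∧
      ∀ a b, Θ a b ∈ (Ideal.map (Ideal.Quotient.mk (𝔭 ^ e)) 𝔭) ^ (j + k + min j k - 3)) ∧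
    (∀ _h : j + k - 1 ≤ e,
      (∀ a b, ((x * y * x⁻¹ * y⁻¹).1 - 1 - (P * Q - Q * P)) a b ∈
          (Ideal.map (Ideal.Quotient.mk (𝔭 ^ e)) 𝔭) ^ (j + k - 1)) ∧
      red K 𝔭 e (j + k - 2) (by omega) (x * y * x⁻¹ * y⁻¹) = 1) := by
  set I := Ideal.map (Ideal.Quotient.mk (𝔭 ^ e)) 𝔭
  have hcomm := SpecialLinearGroup.coe_commutator_sub_one_fin_two x y hx hy
  have hΘ := commutatorHigherTerms_mem hP hQ
  rw [show j - 1 + (k - 1) + min (j - 1) (k - 1) = j + k + min j k - 3 by omega] at hΘ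
  have htr : P.trace * Q.trace ∈ I ^ (2 * (j - 1) + (k - 1)) := by
    rw [pow_add]
    exact Ideal.mul_mem_mul (trace_mem_pow_two_mul_of_det_one_add_eq_one (hx ▸ x.det_coe) hP)
      (Ideal.trace_mem_of_mem_matrix hQ)
  refine ⟨⟨_, hcomm, hΘ⟩, fun h => ⟨?_, red_eq_one_of_sub_one_mem _ _ ?_⟩⟩
  · rw [hcomm, add_assoc, add_sub_cancel_left]
    exact add_mem (Ideal.smul_one_mem_matrix (Ideal.pow_le_pow_right (by omega) htr))
      (Ideal.matrix_pow_antitone (by omega) hΘ)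
  · rw [hcomm]
    refine add_mem (add_mem (sub_mem ?_ ?_) ?_) (Ideal.matrix_pow_antitone (by omega) hΘ)
    · exact Ideal.matrix_pow_antitone (by omega) (Ideal.mul_mem_matrix_pow_add hP hQ)
    · exact Ideal.matrix_pow_antitone (by omega) (Ideal.mul_mem_matrix_pow_add hQ hP)
    · exact Ideal.smul_one_mem_matrix (Ideal.pow_le_pow_right (by omega) htr)
end
end

section
/- Let w ∈ G_e = SL₂(O_K/𝔭^e) satisfy w ≡ I + ϖ^{j−1}Ã (mod ϖ^j) for some j ∈ {2,…,e} and some Ã ∈ M₂(R_e) whose reduction modulo ϖ is a nonzero nilpotent matrix A ∈ sl₂(F_q). Then the number of primitive column vectors v ∈ R_e² fixed by w (i.e. v ∉ 𝔭R_e² and wv = v) is at most (q − 1)·q^{e+j−2}. -/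
set_option synthInstance.maxHeartbeats 400000
set_option maxHeartbeats 1000000

noncomputable section

open Paper

/-!
If `A r k ≠ 0`, row `r` of `w - 1` is `ϖ^(j-1)` times a row `u` whose entry `u k` is a unit,
so every fixed vector `v` satisfies `ϖ^(j-1) (u ⬝ v) = 0`. Hence `u ⬝ v` lies in the annihilator
of `ϖ^(j-1)`, which has `q^(j-1)` elements, and `v` is determined by `u ⬝ v` together with its
other coordinate, which primitivity forces out of `𝔭`: at most `(q - 1) q^(e-1)` choices.
-/

open Ideal Matrix

theorem card_mul_eq_zero_eq_card_quotient_span {R : Type*} [CommRing R] [Finite R] (a : R) :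
    Nat.card {x : R // a * x = 0} = Nat.card (R ⧸ span {a}) := by
  let f := LinearMap.toSpanSingleton R R a
  have hker : Nat.card {x : R // a * x = 0} = Nat.card f.ker :=
    Nat.card_congr <| Equiv.subtypeEquivRight fun x => by simp [f, mul_comm]
  have hker' := Submodule.card_eq_card_quotient_mul_card f.ker
  have hrange := Submodule.card_eq_card_quotient_mul_card f.range
  rw [Nat.card_congr f.quotKerEquivRange.toEquiv] at hker'
  rw [LinearMap.range_toSpanSingleton] at hker' hrange
  rw [hker]
  exact Nat.eq_of_mul_eq_mul_right Nat.card_pos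
    (hker'.symm.trans (hrange.trans (mul_comm _ _)))

theorem exists_eq_pow_mul_add_of_sub_mem {R : Type*} [CommRing R] {p x y : R} {j : ℕ}
    (hj : 1 ≤ j) (h : x - p ^ (j - 1) * y ∈ span {p ^ j}) :
    ∃ t, x = p ^ (j - 1) * (y + p * t) := by
  obtain ⟨t, ht⟩ := mem_span_singleton'.mp h
  refine ⟨t, ?_⟩
  have hpj : p ^ j = p ^ (j - 1) * p := by rw [← pow_succ, Nat.sub_add_cancel hj]
  linear_combination -ht + t * hpj

theorem card_primitive_mul_dotProduct_eq_zero_le {R : Type*} [CommRing R] [Finite R]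
    (𝔪 : Ideal R) {a : R} (ha : ∀ x, a * x = 0 → x ∈ 𝔪) (u : Fin 2 → R) {k : Fin 2}
    (hu : IsUnit (u k)) :
    Nat.card {v : Fin 2 → R // ¬(v 0 ∈ 𝔪 ∧ v 1 ∈ 𝔪) ∧ a * (u ⬝ᵥ v) = 0} ≤
      Nat.card {x : R // x ∉ 𝔪} * Nat.card {x : R // a * x = 0} := by
  have hk : ∀ i : Fin 2, i = k ∨ i = k + 1 := by
    intro i; fin_cases i <;> fin_cases k <;> decide
  have hdot (v : Fin 2 → R) : u ⬝ᵥ v = u k * v k + u (k + 1) * v (k + 1) := by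
    fin_cases k <;> simp [dotProduct, Fin.sum_univ_two, add_comm]
  have hother (v : Fin 2 → R) (hv : ¬(v 0 ∈ 𝔪 ∧ v 1 ∈ 𝔪) ∧ a * (u ⬝ᵥ v) = 0) : v (k + 1) ∉ 𝔪 := by
    intro hvk'
    have hvk : v k ∈ 𝔪 := by
      have h := 𝔪.sub_mem (ha _ hv.2) (𝔪.mul_mem_left (u (k + 1)) hvk')
      rwa [hdot, add_sub_cancel_right, unit_mul_mem_iff_mem 𝔪 hu] at h
    have hall : ∀ i, v i ∈ 𝔪 := fun i => by rcases hk i with rfl | rfl <;> assumption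
    exact hv.1 ⟨hall 0, hall 1⟩
  rw [← Nat.card_prod]
  refine Nat.card_le_card_of_injective
    (fun v => (⟨v.1 (k + 1), hother v.1 v.2⟩, ⟨u ⬝ᵥ v.1, v.2.2⟩)) ?_
  rintro ⟨v, hv⟩ ⟨w, hw⟩ h
  simp only [Prod.mk.injEq, Subtype.mk.injEq] at h
  obtain ⟨h1, h2⟩ := h
  rw [hdot, hdot, h1] at h2
  have h0 : v k = w k := hu.mul_left_cancel (add_right_cancel h2)
  ext i
  rcases hk i with rfl | rfl <;> assumption

section Uniformizer

variable {O : Type*} [CommRing O] [IsDedekindDomain O] {𝔭 : Ideal O} [𝔭.IsMaximal] {ϖ : O}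

theorem Ideal.span_singleton_pow_sup_pow_eq (hϖ : ϖ ∈ 𝔭) (hϖ2 : ϖ ∉ 𝔭 ^ 2) {k e : ℕ}
    (hke : k ≤ e) : span {ϖ ^ k} ⊔ 𝔭 ^ e = 𝔭 ^ k := by
  -- `(ϖ) = 𝔭 𝔠` with `𝔠` coprime to `𝔭` because `ϖ ∉ 𝔭²`
  obtain ⟨𝔠, h𝔠⟩ := dvd_iff_le.mpr ((span_singleton_le_iff_mem 𝔭).mpr hϖ)
  have hcop : 𝔠 ⊔ 𝔭 = ⊤ := by
    by_contra h
    have h𝔠𝔭 : 𝔠 ≤ 𝔭 := (IsMaximal.eq_of_le ‹_› h le_sup_right).symm ▸ le_sup_left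
    exact hϖ2 <| (span_singleton_le_iff_mem _).mp <| h𝔠 ▸ pow_two 𝔭 ▸ mul_mono_right h𝔠𝔭
  calc span {ϖ ^ k} ⊔ 𝔭 ^ e = 𝔭 ^ k * (𝔠 ^ k ⊔ 𝔭 ^ (e - k)) := by
        rw [← span_singleton_pow, h𝔠, mul_pow, mul_sup, ← pow_add, Nat.add_sub_cancel' hke]
    _ = 𝔭 ^ k := by rw [pow_sup_pow_eq_top hcop, mul_top]

theorem Ideal.map_pow_eq_span_pow (hϖ : ϖ ∈ 𝔭) (hϖ2 : ϖ ∉ 𝔭 ^ 2) {k e : ℕ} (hke : k ≤ e) :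
    (𝔭 ^ k).map (Quotient.mk (𝔭 ^ e)) = span {Quotient.mk (𝔭 ^ e) ϖ ^ k} := by
  rw [← span_singleton_pow_sup_pow_eq hϖ hϖ2 hke, map_sup, map_span, Set.image_singleton,
    map_quotient_self, sup_bot_eq, map_pow]

theorem Ideal.Quotient.mk_pow_ne_zero (hϖ : ϖ ∈ 𝔭) (hϖ2 : ϖ ∉ 𝔭 ^ 2) (hbot : 𝔭 ≠ ⊥) {k e : ℕ}
    (hke : k < e) : Quotient.mk (𝔭 ^ e) ϖ ^ k ≠ 0 := by
  intro h
  rw [← map_pow, Quotient.eq_zero_iff_mem, ← span_singleton_le_iff_mem,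
    ← sup_eq_right, span_singleton_pow_sup_pow_eq hϖ hϖ2 hke.le] at h
  exact (pow_right_strictAnti 𝔭 hbot IsPrime.ne_top' hke).ne' h

end Uniformizer

section QuotientPow

variable {O : Type*} [CommRing O] {𝔭 : Ideal O} [𝔭.IsMaximal] {e : ℕ}

theorem Ideal.Quotient.isUnit_of_factor_ne_zero (he : e ≠ 0) {y : O ⧸ 𝔭 ^ e}
    (hy : Quotient.factor (pow_le_self he) y ≠ 0) : IsUnit y := by
  obtain ⟨x, rfl⟩ := Quotient.mk_surjective y
  rw [Quotient.factor_mk, Ne, Quotient.eq_zero_iff_mem] at hy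
  exact (Quotient.isUnit_mk_pow_iff_notMem 𝔭 he).mpr hy

theorem Ideal.Quotient.mem_map_of_mul_eq_zero (he : e ≠ 0) {a x : O ⧸ 𝔭 ^ e} (ha : a ≠ 0)
    (hax : a * x = 0) : x ∈ 𝔭.map (Quotient.mk (𝔭 ^ e)) := by
  obtain ⟨y, rfl⟩ := Quotient.mk_surjective x
  rw [mem_quotient_iff_mem (pow_le_self he)]
  by_contra hy
  exact ha (((Quotient.isUnit_mk_pow_iff_notMem 𝔭 he).mpr hy).mul_left_eq_zero.mp hax)

variable [IsDedekindDomain O]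

theorem Ideal.card_quotient_pow (hbot : 𝔭 ≠ ⊥) (k : ℕ) :
    Nat.card (O ⧸ 𝔭 ^ k) = Nat.card (O ⧸ 𝔭) ^ k := by
  simp only [← Submodule.cardQuot_apply, cardQuot_pow_of_prime hbot]

theorem Ideal.card_quotient_map_pow (hbot : 𝔭 ≠ ⊥) {k : ℕ} (hke : k ≤ e) :
    Nat.card ((O ⧸ 𝔭 ^ e) ⧸ (𝔭 ^ k).map (Quotient.mk (𝔭 ^ e))) = Nat.card (O ⧸ 𝔭) ^ k := by
  rw [Nat.card_congr (DoubleQuot.quotQuotEquivQuotSup _ _).toEquiv,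
    sup_eq_right.mpr (pow_le_pow_right hke), card_quotient_pow hbot]

theorem Ideal.card_quotient_pow_notMem_map [Ring.HasFiniteQuotients O] (hbot : 𝔭 ≠ ⊥) (he : e ≠ 0) :
    Nat.card {x : O ⧸ 𝔭 ^ e // x ∉ 𝔭.map (Quotient.mk (𝔭 ^ e))} =
      (Nat.card (O ⧸ 𝔭) - 1) * Nat.card (O ⧸ 𝔭) ^ (e - 1) := by
  classical
  have : Finite (O ⧸ 𝔭) := Ring.HasFiniteQuotients.finiteQuotient hbot
  have : Finite (O ⧸ 𝔭 ^ e) := Ring.HasFiniteQuotients.finiteQuotient (pow_ne_zero e hbot)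
  have hquot :
      Nat.card (𝔭.map (Quotient.mk (𝔭 ^ e))) * Nat.card (O ⧸ 𝔭) = Nat.card (O ⧸ 𝔭) ^ e := by
    have h1 := card_quotient_map_pow hbot (Nat.one_le_iff_ne_zero.mpr he)
    rw [pow_one, pow_one] at h1
    rw [← card_quotient_pow hbot e,
      Submodule.card_eq_card_quotient_mul_card (𝔭.map (Quotient.mk (𝔭 ^ e))), h1]
  have hsplit : Nat.card (𝔭.map (Quotient.mk (𝔭 ^ e))) +
      Nat.card {x // x ∉ 𝔭.map (Quotient.mk (𝔭 ^ e))} = Nat.card (O ⧸ 𝔭) ^ e := by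
    rw [← card_quotient_pow hbot, ← Nat.card_sum, Nat.card_congr (Equiv.sumCompl _)]
  have hqe : Nat.card (O ⧸ 𝔭) ^ e = Nat.card (O ⧸ 𝔭) ^ (e - 1) * Nat.card (O ⧸ 𝔭) := by
    rw [← pow_succ, Nat.sub_add_cancel (Nat.one_le_iff_ne_zero.mpr he)]
  have hm := Nat.eq_of_mul_eq_mul_right Nat.card_pos (hquot.trans hqe)
  rw [Nat.sub_one_mul, mul_comm, ← hqe, ← hsplit, hm, Nat.add_sub_cancel_left]

end QuotientPow

theorem card_primitive_fixed_le {O : Type*} [CommRing O] [IsDedekindDomain O]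
    [Ring.HasFiniteQuotients O] {𝔭 : Ideal O} [𝔭.IsMaximal] (hbot : 𝔭 ≠ ⊥) {ϖ : O}
    (hϖ : ϖ ∈ 𝔭) (hϖ2 : ϖ ∉ 𝔭 ^ 2) {e j : ℕ} (hj : 1 ≤ j) (hje : j ≤ e)
    (W Alift : Matrix (Fin 2) (Fin 2) (O ⧸ 𝔭 ^ e)) (A : Matrix (Fin 2) (Fin 2) (O ⧸ 𝔭))
    (hA0 : A ≠ 0)
    (hredA : ∀ a b, Ideal.Quotient.factor (pow_le_self (by omega : e ≠ 0)) (Alift a b) = A a b)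
    (hw : ∀ a b, (W - 1) a b - Ideal.Quotient.mk (𝔭 ^ e) ϖ ^ (j - 1) * Alift a b ∈
        (𝔭.map (Ideal.Quotient.mk (𝔭 ^ e))) ^ j) :
    Nat.card {v : Fin 2 → O ⧸ 𝔭 ^ e //
        ¬(v 0 ∈ 𝔭.map (Ideal.Quotient.mk (𝔭 ^ e)) ∧ v 1 ∈ 𝔭.map (Ideal.Quotient.mk (𝔭 ^ e))) ∧
        W *ᵥ v = v} ≤
      (Nat.card (O ⧸ 𝔭) - 1) * Nat.card (O ⧸ 𝔭) ^ (e + j - 2) := by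
  classical
  have he : e ≠ 0 := by omega
  have : Finite (O ⧸ 𝔭 ^ e) := Ring.HasFiniteQuotients.finiteQuotient (pow_ne_zero e hbot)
  set p := Ideal.Quotient.mk (𝔭 ^ e) ϖ
  obtain ⟨r, k, hrk⟩ : ∃ r k, A r k ≠ 0 := by
    by_contra! h
    exact hA0 (Matrix.ext h)
  have hrow (i : Fin 2) : ∃ t, (W - 1) r i = p ^ (j - 1) * (Alift r i + p * t) := by
    refine exists_eq_pow_mul_add_of_sub_mem hj ?_
    have h := hw r i
    rwa [← Ideal.map_pow, map_pow_eq_span_pow hϖ hϖ2 hje] at h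
  choose t ht using hrow
  set u : Fin 2 → O ⧸ 𝔭 ^ e := fun i => Alift r i + p * t i
  have hu : IsUnit (u k) := by
    refine Quotient.isUnit_of_factor_ne_zero he ?_
    have hp : Ideal.Quotient.factor (pow_le_self he) p = 0 := by
      rw [Quotient.factor_mk, Quotient.eq_zero_iff_mem]; exact hϖ
    simpa [u, hp, hredA] using hrk
  have hfix (v : Fin 2 → O ⧸ 𝔭 ^ e) (hv : W *ᵥ v = v) : p ^ (j - 1) * (u ⬝ᵥ v) = 0 := by
    have h : ((W - 1) *ᵥ v) r = 0 := by rw [sub_mulVec, one_mulVec, hv, sub_self, Pi.zero_apply]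
    rw [mulVec, dotProduct, Fin.sum_univ_two, ht, ht] at h
    simp only [u, dotProduct, Fin.sum_univ_two]
    linear_combination h
  calc _ ≤ Nat.card {v : Fin 2 → O ⧸ 𝔭 ^ e //
          ¬(v 0 ∈ 𝔭.map (Ideal.Quotient.mk (𝔭 ^ e)) ∧ v 1 ∈ 𝔭.map (Ideal.Quotient.mk (𝔭 ^ e))) ∧
          p ^ (j - 1) * (u ⬝ᵥ v) = 0} :=
        Nat.card_le_card_of_injective (Subtype.impEmbedding _ _ fun v hv => ⟨hv.1, hfix v hv.2⟩)
          (Subtype.impEmbedding _ _ _).injective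
    _ ≤ Nat.card {x // x ∉ 𝔭.map (Ideal.Quotient.mk (𝔭 ^ e))} *
          Nat.card {x // p ^ (j - 1) * x = 0} :=
        card_primitive_mul_dotProduct_eq_zero_le _ (fun _ => Quotient.mem_map_of_mul_eq_zero he
          (Quotient.mk_pow_ne_zero hϖ hϖ2 hbot (by omega))) u hu
    _ = (Nat.card (O ⧸ 𝔭) - 1) * Nat.card (O ⧸ 𝔭) ^ (e - 1) * Nat.card (O ⧸ 𝔭) ^ (j - 1) := by
        rw [card_quotient_pow_notMem_map hbot he, card_mul_eq_zero_eq_card_quotient_span,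
          ← map_pow_eq_span_pow hϖ hϖ2 (by omega), card_quotient_map_pow hbot (by omega)]
    _ = (Nat.card (O ⧸ 𝔭) - 1) * Nat.card (O ⧸ 𝔭) ^ (e + j - 2) := by
        rw [mul_assoc, ← pow_add]
        congr 2
        omega

/-- Lemma `nil-fp`.
If `w ∈ SL₂(𝓞_K/𝔭^e)` satisfies `w ≡ I + ϖ^{j-1}Ã (mod ϖ^j)` for some
`j ∈ {2,…,e}` and some `Ã` reducing mod `ϖ` to a nonzero nilpotent
`A ∈ sl₂(F_q)`, then the number of primitive fixed columns of `w` is at most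
`(q-1)·q^{e+j-2}`. -/
theorem statement12 (K : Type*) [Field K] [NumberField K]
    (𝔭 : Ideal (NumberField.RingOfIntegers K)) (hprime : 𝔭.IsPrime) (hbot : 𝔭 ≠ ⊥)
    (ϖ : NumberField.RingOfIntegers K) (hϖ : ϖ ∈ 𝔭) (hϖ2 : ϖ ∉ 𝔭 ^ 2)
    (e j : ℕ) (hj : 2 ≤ j) (hje : j ≤ e)
    (w : Matrix.SpecialLinearGroup (Fin 2) (NumberField.RingOfIntegers K ⧸ 𝔭 ^ e))
    (Alift : Matrix (Fin 2) (Fin 2) (NumberField.RingOfIntegers K ⧸ 𝔭 ^ e))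
    (A : Matrix (Fin 2) (Fin 2) (NumberField.RingOfIntegers K ⧸ 𝔭))
    (hA0 : A ≠ 0)
    (hredA : ∀ a b, Ideal.Quotient.factor (S := 𝔭 ^ e) (T := 𝔭) (Ideal.pow_le_self (by omega))
        (Alift a b) = A a b)
    (hw : ∀ a b, (w.1 - 1) a b - (Ideal.Quotient.mk (𝔭 ^ e) ϖ) ^ (j - 1) * Alift a b ∈
        (Ideal.map (Ideal.Quotient.mk (𝔭 ^ e)) 𝔭) ^ j) :
    Nat.card {v : Fin 2 → (NumberField.RingOfIntegers K ⧸ 𝔭 ^ e) //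
        (¬ (v 0 ∈ Ideal.map (Ideal.Quotient.mk (𝔭 ^ e)) 𝔭 ∧
            v 1 ∈ Ideal.map (Ideal.Quotient.mk (𝔭 ^ e)) 𝔭)) ∧
        Matrix.mulVec w.1 v = v} ≤
      (Nat.card (NumberField.RingOfIntegers K ⧸ 𝔭) - 1) *
        Nat.card (NumberField.RingOfIntegers K ⧸ 𝔭) ^ (e + j - 2) :=
  have := hprime.isMaximal hbot
  card_primitive_fixed_le hbot hϖ hϖ2 (by omega) hje w.1 Alift A hA0 hredA hw
end
end

section
/- Assume e ≥ 2. For every subgroup H ⊆ G_e = SL₂(O_K/𝔭^e), one has χ_e(H) ≤ χ_e(N₂(H)) + χ₁(H₁) − q^{−1}, where H₁ := ρ_{e,1}(H) ⊆ G₁ = SL₂(F_q) is the reduction of H modulo 𝔭 and N₂(H) := ker(ρ_{e,1}|_H). -/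
noncomputable section

/-!
By Burnside's lemma, `χ(H) = #{(h, x) ∈ H × X : h • x = x} / |G|`. Split these pairs according
to whether `h` lies in `N = ker ρ`: those with `h ∈ N` give `χ(N₂(H))`. A pair with `h ∉ N` maps
to a pair `(ρ h, ρ x)` of `H₁ × X₁` with `ρ h ≠ 1`, and since `N` acts transitively on the fibres
of `X → X₁`, each such pair has at most `|N|` preimages. The pairs `(1, x')` of `H₁ × X₁` are never
hit; they account for `|X₁| / |G₁| = 1 / |U₁| = q⁻¹`. Transitivity on the fibres holds because
`U_e` maps onto `U₁`, and `ρ` is onto because its kernel `𝔭 / 𝔭^e` is nil.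
-/

theorem Set.ncard_le_mul_ncard_of_mapsTo {α β : Type*} {s : Set α} {t : Set β}
    {f : α → β} (hf : Set.MapsTo f s t) (ht : t.Finite) (n : ℕ)
    (hn : ∀ b ∈ t, (s ∩ f ⁻¹' {b}).ncard ≤ n) : s.ncard ≤ n * t.ncard := by
  classical
  rcases s.finite_or_infinite with hs | hs
  · lift s to Finset α using hs
    lift t to Finset β using ht
    simp only [Set.ncard_coe_finset]
    refine Finset.card_le_mul_card_image_of_maps_to hf n fun b hb => ?_
    rw [← Set.ncard_coe_finset, Finset.coe_filter]
    exact hn b hb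
  · simp [hs.ncard]

namespace Matrix.SpecialLinearGroup

variable {n R S : Type*} [Fintype n] [DecidableEq n] [CommRing R] [CommRing S]

theorem map_surjective_of_ker_le_nilradical (f : R →+* S) (hf : Function.Surjective f)
    (hker : RingHom.ker f ≤ nilradical R) :
    Function.Surjective (map (n := n) f) := by
  intro A
  cases isEmpty_or_nonempty n
  · exact ⟨1, Subsingleton.elim _ _⟩
  obtain ⟨i⟩ := ‹Nonempty n›
  obtain ⟨B, hB⟩ : ∃ B : Matrix n n R, ∀ j k, f (B j k) = A j k :=
    ⟨fun j k => (hf (A j k)).choose, fun j k => (hf (A j k)).choose_spec⟩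
  have hdetB : f B.det = 1 := by
    rw [RingHom.map_det, ← A.2]
    congr 1
    ext j k
    exact hB j k
  -- `det B ≡ 1` modulo a nil ideal, so `det B` is a unit; rescaling row `i` by its inverse fixes it
  obtain ⟨u, hu⟩ : IsUnit B.det := by
    simpa using (mem_nilradical.1 (hker (show B.det - 1 ∈ RingHom.ker f by
      simp [hdetB]))).isUnit_add_one
  have hfu : f ↑u⁻¹ = 1 := by
    have := congrArg f u.inv_mul
    rwa [map_mul, map_one, hu, hdetB, mul_one] at this
  refine ⟨⟨B.updateRow i (((u⁻¹ : Rˣ) : R) • B i), ?_⟩, ?_⟩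
  · rw [det_updateRow_smul, updateRow_eq_self, ← hu, Units.inv_mul]
  · ext j k
    change f (B.updateRow i _ j k) = A j k
    rcases eq_or_ne j i with rfl | hj
    · simp [hB, hfu]
    · simp [hj, hB]

end Matrix.SpecialLinearGroup

theorem Ideal.Quotient.ker_factor_pow_le_nilradical {R : Type*} [CommRing R]
    (I : Ideal R) {j e : ℕ} (hj : 0 < j) (h : j ≤ e) :
    RingHom.ker (Ideal.Quotient.factor (Ideal.pow_le_pow_right (I := I) h)) ≤
      nilradical (R ⧸ I ^ e) := by
  intro a ha
  obtain ⟨x, rfl⟩ := Ideal.Quotient.mk_surjective a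
  rw [RingHom.mem_ker, Ideal.Quotient.factor_mk, Ideal.Quotient.eq_zero_iff_mem] at ha
  refine mem_nilradical.2 ⟨e, ?_⟩
  rw [← map_pow, Ideal.Quotient.eq_zero_iff_mem]
  exact Ideal.pow_mem_pow (Ideal.pow_le_self hj.ne' ha) e

namespace Paper

open MulAction

section FixedPairs

variable {G X : Type*} [Group G] [MulAction G X]

variable (X) in
def fixedPairs (S : Set G) : Set (G × X) := {p | p.1 ∈ S ∧ p.1 • p.2 = p.2}

theorem fixedPairs_mono {S T : Set G} (h : S ⊆ T) : fixedPairs X S ⊆ fixedPairs X T :=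
  fun _ hp => ⟨h hp.1, hp.2⟩

theorem ncard_fixedPairs_subgroup (H : Subgroup G) :
    (fixedPairs X (H : Set G)).ncard = Nat.card (Quotient (orbitRel H X)) * Nat.card H := by
  let e : fixedPairs X H ≃ Σ h : H, fixedBy X h :=
    { toFun p := ⟨⟨p.1.1, p.2.1⟩, ⟨p.1.2, p.2.2⟩⟩
      invFun s := ⟨(s.1.1, s.2.1), s.1.2, s.2.2⟩
      left_inv _ := rfl
      right_inv _ := rfl }
  rw [← Nat.card_coe_set_eq, Nat.card_congr (e.trans (sigmaFixedByEquivOrbitsProdGroup H X)),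
    Nat.card_prod]

theorem ncard_fixedPairs_inter_add_diff [Finite G] [Finite X] (S T : Set G) :
    (fixedPairs X (S ∩ T)).ncard + (fixedPairs X (S \ T)).ncard = (fixedPairs X S).ncard := by
  rw [← Set.ncard_union_eq]
  · congr 1
    ext p
    simp only [fixedPairs, Set.mem_union, Set.mem_ofPred_eq, Set.mem_inter_iff, Set.mem_sdiff]
    tauto
  · exact Set.disjoint_left.2 fun p hp hp' => hp'.1.2 hp.1.2

theorem ncard_fixedPairs_one : (fixedPairs X ({1} : Set G)).ncard = Nat.card X := by
  have : fixedPairs X ({1} : Set G) = {1} ×ˢ Set.univ := by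
    ext p
    simp +contextual [fixedPairs, and_iff_left_of_imp]
  rw [this, Set.ncard_prod, Set.ncard_singleton, Set.ncard_univ, one_mul]

variable {G' X' : Type*} [Group G']

theorem ncard_fixedPairs_fiber_le [Finite G] [Finite X] (φ : G →* G') (π : X → X')
    (htrans : ∀ x y, π x = π y → ∃ k ∈ φ.ker, k • y = x) (g' : G') (x' : X') :
    {p : G × X | φ p.1 = g' ∧ π p.2 = x' ∧ p.1 • p.2 = p.2}.ncard ≤ Nat.card φ.ker := by
  rcases Set.eq_empty_or_nonempty {p : G × X | φ p.1 = g' ∧ π p.2 = x' ∧ p.1 • p.2 = p.2}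
    with hempty | ⟨⟨g₀, x₀⟩, hg₀, hx₀, hfix₀⟩
  · simp [hempty]
  choose! k hk using fun x (hx : π x = x') => htrans x x₀ (hx.trans hx₀.symm)
  -- `p` is recovered from `p.1 * k p.2 * g₀⁻¹ ∈ ker φ`, which sends `x₀` to `p.2`
  have hsmul : ∀ p : G × X, π p.2 = x' → p.1 • p.2 = p.2 → (p.1 * k p.2 * g₀⁻¹) • x₀ = p.2 :=
    fun p hp hfix => by
      rw [mul_smul, mul_smul, inv_smul_eq_iff.2 hfix₀.symm, (hk _ hp).2, hfix]
  change _ ≤ Nat.card (φ.ker : Set G)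
  rw [Nat.card_coe_set_eq]
  refine Set.ncard_le_ncard_of_injOn (fun p => p.1 * k p.2 * g₀⁻¹) ?_ ?_
  · rintro p ⟨hp, hpx, -⟩
    simp [MonoidHom.mem_ker.1 (hk _ hpx).1, hp, hg₀]
  · rintro p ⟨-, hpx, hpfix⟩ p' ⟨-, hpx', hpfix'⟩ heq
    have h2 : p.2 = p'.2 := by
      rw [← hsmul p hpx hpfix, ← hsmul p' hpx' hpfix']
      exact congrArg (· • x₀) heq
    have h1 : p.1 = p'.1 := by
      simp only at heq
      rw [h2] at heq
      exact mul_right_cancel (mul_right_cancel heq)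
    exact Prod.ext h1 h2

variable [MulAction G' X']

theorem ncard_fixedPairs_preimage_le [Finite G] [Finite X] [Finite G'] [Finite X'] (φ : G →* G')
    (π : X → X') (hπ : ∀ (g : G) x, π (g • x) = φ g • π x)
    (htrans : ∀ x y, π x = π y → ∃ k ∈ φ.ker, k • y = x) (T : Set G') :
    (fixedPairs X (φ ⁻¹' T)).ncard ≤ Nat.card φ.ker * (fixedPairs X' T).ncard := by
  refine Set.ncard_le_mul_ncard_of_mapsTo (f := Prod.map φ π) ?_ (Set.toFinite _) _ ?_
  · rintro p ⟨hp, hfix⟩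
    exact ⟨hp, by rw [Prod.map_snd, Prod.map_fst, ← hπ, hfix]⟩
  · rintro ⟨g', x'⟩ -
    refine le_trans (Set.ncard_le_ncard ?_) (ncard_fixedPairs_fiber_le φ π htrans g' x')
    rintro p ⟨⟨-, hfix⟩, hp⟩
    simp only [Set.mem_preimage, Set.mem_singleton_iff, Prod.map, Prod.mk.injEq] at hp
    exact ⟨hp.1, hp.2, hfix⟩

theorem ncard_fixedPairs_add_le [Finite G] [Finite X] [Finite G'] [Finite X'] (φ : G →* G')
    (π : X → X') (hπ : ∀ (g : G) x, π (g • x) = φ g • π x)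
    (htrans : ∀ x y, π x = π y → ∃ k ∈ φ.ker, k • y = x) (H : Subgroup G) :
    (fixedPairs X (H : Set G)).ncard + Nat.card φ.ker * Nat.card X' ≤
      (fixedPairs X ((H : Set G) ∩ φ.ker)).ncard +
        Nat.card φ.ker * (fixedPairs X' (H.map φ : Set G')).ncard := by
  have hsplit := ncard_fixedPairs_inter_add_diff (X := X) H (φ.ker : Set G)
  have hsplit' := ncard_fixedPairs_inter_add_diff (X := X') (H.map φ : Set G') {1}
  rw [Set.inter_eq_right.2 (Set.singleton_subset_iff.2 (H.map φ).one_mem),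
    ncard_fixedPairs_one] at hsplit'
  have hdiff : (fixedPairs X ((H : Set G) \ φ.ker)).ncard ≤
      Nat.card φ.ker * (fixedPairs X' ((H.map φ : Set G') \ {1})).ncard := by
    refine (Set.ncard_le_ncard (fixedPairs_mono ?_)).trans
      (ncard_fixedPairs_preimage_le φ π hπ htrans _)
    rintro g ⟨hg, hgk⟩
    exact ⟨Subgroup.mem_map_of_mem φ hg, hgk⟩
  rw [← hsplit', Nat.mul_add]
  omega

end FixedPairs

section Cosets

variable {G G' : Type*} [Group G] [Group G']

def cosetChi (U H : Subgroup G) : ℝ :=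
  (Nat.card (Quotient (orbitRel H (G ⧸ U))) : ℝ) / (H.index : ℝ)

theorem cosetChi_eq_ncard_fixedPairs_div [Finite G] (U H : Subgroup G) :
    cosetChi U H = (fixedPairs (G ⧸ U) (H : Set G)).ncard / Nat.card G := by
  have hH : (Nat.card H : ℝ) ≠ 0 := by exact_mod_cast Nat.card_pos.ne'
  rw [cosetChi, ncard_fixedPairs_subgroup, ← H.index_mul_card]
  push_cast
  exact (mul_div_mul_right _ _ hH).symm

def cosetMap (φ : G →* G') {U : Subgroup G} {U' : Subgroup G'} (hU : U ≤ U'.comap φ) :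
    G ⧸ U → G' ⧸ U' :=
  Quotient.map' φ fun a b h => by
    rw [QuotientGroup.leftRel_apply] at h ⊢
    simpa using hU h

theorem cosetMap_smul (φ : G →* G') {U : Subgroup G} {U' : Subgroup G'} (hU : U ≤ U'.comap φ)
    (g : G) (x : G ⧸ U) : cosetMap φ hU (g • x) = φ g • cosetMap φ hU x := by
  induction x using QuotientGroup.induction_on with
  | H a => exact congrArg (QuotientGroup.mk (s := U')) (map_mul φ g a)

theorem exists_mem_ker_smul_eq_of_cosetMap_eq (φ : G →* G') {U : Subgroup G} {U' : Subgroup G'}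
    (hU : U ≤ U'.comap φ) (hU' : U' ≤ U.map φ) {x y : G ⧸ U}
    (h : cosetMap φ hU x = cosetMap φ hU y) : ∃ k ∈ φ.ker, k • y = x := by
  induction x using QuotientGroup.induction_on with | H a =>
  induction y using QuotientGroup.induction_on with | H b =>
  obtain ⟨u, hu, hφu⟩ := hU' (QuotientGroup.eq.1 h.symm)
  refine ⟨a * u⁻¹ * b⁻¹, ?_, ?_⟩
  · simp [MonoidHom.mem_ker, hφu]
  · rw [MulAction.Quotient.smul_mk, QuotientGroup.eq]
    simpa using hu

theorem cosetChi_le [Finite G] [Finite G'] (φ : G →* G') (hφ : Function.Surjective φ)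
    {U : Subgroup G} {U' : Subgroup G'} (hU : U.map φ = U') (H : Subgroup G) :
    cosetChi U H ≤ cosetChi U (H ⊓ φ.ker) + cosetChi U' (H.map φ) - (Nat.card U' : ℝ)⁻¹ := by
  have hle : U ≤ U'.comap φ := hU ▸ Subgroup.le_comap_map φ U
  have hcount := ncard_fixedPairs_add_le φ (cosetMap φ hle) (cosetMap_smul φ hle)
    (fun _ _ => exists_mem_ker_smul_eq_of_cosetMap_eq φ hle hU.ge) H
  have hG : Nat.card G = Nat.card φ.ker * Nat.card G' := by
    rw [φ.ker.card_eq_card_quotient_mul_card_subgroup, mul_comm,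
      Nat.card_congr (QuotientGroup.quotientKerEquivOfSurjective φ hφ).toEquiv]
  have hG' : Nat.card G' = Nat.card (G' ⧸ U') * Nat.card U' :=
    U'.card_eq_card_quotient_mul_card_subgroup
  rw [cosetChi_eq_ncard_fixedPairs_div, cosetChi_eq_ncard_fixedPairs_div,
    cosetChi_eq_ncard_fixedPairs_div, hG, hG']
  have hN : (0 : ℝ) < Nat.card φ.ker := by exact_mod_cast Nat.card_pos
  have hX' : (0 : ℝ) < Nat.card (G' ⧸ U') := by exact_mod_cast Nat.card_pos
  have hU' : (0 : ℝ) < Nat.card U' := by exact_mod_cast Nat.card_pos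
  push_cast
  field_simp
  rw [le_sub_iff_add_le]
  exact_mod_cast hcount

end Cosets

section SpecialLinear

open Matrix

variable {R S : Type*} [CommRing R] [CommRing S]

theorem chi_eq_cosetChi (H : Subgroup (SpecialLinearGroup (Fin 2) R)) :
    chi R H = cosetChi (unipotent R) H :=
  rfl

theorem unipotent_ext {g h : SpecialLinearGroup (Fin 2) R} (hg : g ∈ unipotent R)
    (hh : h ∈ unipotent R) (h01 : g 0 1 = h 0 1) : g = h := by
  obtain ⟨hg00, hg10, hg11⟩ := hg
  obtain ⟨hh00, hh10, hh11⟩ := hh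
  ext i j
  fin_cases i <;> fin_cases j <;> simp_all

def unipotentEquiv : unipotent R ≃ R where
  toFun g := (g : SpecialLinearGroup (Fin 2) R) 0 1
  invFun x := ⟨⟨!![1, x; 0, 1], by simp [det_fin_two_of]⟩, rfl, rfl, rfl⟩
  left_inv g := Subtype.ext <| unipotent_ext ⟨rfl, rfl, rfl⟩ g.2 rfl
  right_inv x := by simp

theorem card_unipotent : Nat.card (unipotent R) = Nat.card R :=
  Nat.card_congr unipotentEquiv

theorem map_unipotent (f : R →+* S) (hf : Function.Surjective f) :
    (unipotent R).map (SpecialLinearGroup.map f) = unipotent S := by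
  have hle : (unipotent R).map (SpecialLinearGroup.map f) ≤ unipotent S := by
    rintro _ ⟨g, ⟨h00, h10, h11⟩, rfl⟩
    exact ⟨by simp [h00], by simp [h10], by simp [h11]⟩
  refine le_antisymm hle fun g hg => ?_
  obtain ⟨x, hx⟩ := hf (g 0 1)
  let u := unipotentEquiv.symm x
  refine ⟨u, u.2, unipotent_ext (hle ⟨u, u.2, rfl⟩) hg ?_⟩
  rw [SpecialLinearGroup.map_apply_coe, RingHom.mapMatrix_apply, Matrix.map_apply]
  exact hx

end SpecialLinear

end Paper

open Paper
/-- Lemma `burnside-first-level-comparison`.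
Assume `e ≥ 2`.  For every subgroup `H ⊆ G_e = SL₂(𝓞_K/𝔭^e)`,
`χ_e(H) ≤ χ_e(N₂(H)) + χ₁(H₁) - q⁻¹`, where `H₁ = ρ_{e,1}(H)` and
`N₂(H) = ker (ρ_{e,1}|_H)`. -/
theorem statement14 (K : Type*) [Field K] [NumberField K]
    (𝔭 : Ideal (NumberField.RingOfIntegers K)) (hbot : 𝔭 ≠ ⊥)
    (e : ℕ) (he : 2 ≤ e)
    (H : Subgroup (Matrix.SpecialLinearGroup (Fin 2) (NumberField.RingOfIntegers K ⧸ 𝔭 ^ e))) :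
    chi (NumberField.RingOfIntegers K ⧸ 𝔭 ^ e) H ≤
      chi (NumberField.RingOfIntegers K ⧸ 𝔭 ^ e)
          (H ⊓ (red K 𝔭 e 1 (by omega)).ker) +
        chi (NumberField.RingOfIntegers K ⧸ 𝔭 ^ 1)
          (Subgroup.map (red K 𝔭 e 1 (by omega)) H) -
        (Nat.card (NumberField.RingOfIntegers K ⧸ 𝔭) : ℝ)⁻¹ := by
  have : Finite (NumberField.RingOfIntegers K ⧸ 𝔭 ^ e) :=
    Ideal.finiteQuotientOfFreeOfNeBot _ (pow_ne_zero e hbot)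
  have : Finite (NumberField.RingOfIntegers K ⧸ 𝔭 ^ 1) :=
    Ideal.finiteQuotientOfFreeOfNeBot _ (pow_ne_zero 1 hbot)
  have hred : Function.Surjective (red K 𝔭 e 1 (by omega)) :=
    Matrix.SpecialLinearGroup.map_surjective_of_ker_le_nilradical _
      (Ideal.Quotient.factor_surjective _)
      (Ideal.Quotient.ker_factor_pow_le_nilradical 𝔭 one_pos (by omega))
  have hq : Nat.card (NumberField.RingOfIntegers K ⧸ 𝔭 ^ 1) =
      Nat.card (NumberField.RingOfIntegers K ⧸ 𝔭) := by
    rw [pow_one]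
  rw [chi_eq_cosetChi, chi_eq_cosetChi, chi_eq_cosetChi, ← hq, ← card_unipotent]
  exact cosetChi_le _ hred (map_unipotent _ (Ideal.Quotient.factor_surjective _)) H
end
end

section
/- Let A and B be finite groups and set Q = A × B. Let U_A ⊆ A, U_B ⊆ B be subgroups and U = U_A × U_B ⊆ Q. Let H ⊆ Q be a subgroup, put H_A := {a ∈ A : (a, 1) ∈ H} and let H^B := pr_B(H) be the image of H under the projection to B. Then χ_{Q,U}(H) ≤ χ_{A,U_A}(H_A) · χ_{B,U_B}(H^B), where for a finite group G with subgroups H' and U' one defines χ_{G,U'}(H') := |H'\G/U'| / [G : H'] (the number of double cosets H'\G/U' divided by the index of H'). -/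
noncomputable section

namespace Paper

/-- `χ_{G,U}(H) = |H\G/U| / [G:H]`: the number of `(H,U)`-double cosets in `G`
divided by the index of `H`. -/
def chiDoset (G : Type*) [Group G] (U H : Subgroup G) : ℝ :=
  (Nat.card (DoubleCoset.Quotient (H : Set G) (U : Set G)) : ℝ) / (H.index : ℝ)

end Paper

open Paper

/-!
Restricting the projection `A × B → B` to `H` gives a surjection onto `H^B` with kernel `H_A`,
so `|H| = |H_A| |H^B|` and hence `[Q : H] = [A : H_A] [B : H^B]`. On double cosets, choosing a
representative `b` of each class in `H^B\B/U_B`, the map `(H_A a U_A, H^B b U_B) ↦ H (a, b) U`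
is well defined and surjective: any `(a, b')` can be moved by an element `(h_A, h_B) ∈ H` and
by `(1, u_B) ∈ U` so that its second coordinate becomes the chosen representative.
-/

namespace Subgroup

variable {A B : Type*} [Group A] [Group B]

theorem card_eq_card_comap_inl_mul_card_map_snd (H : Subgroup (A × B)) :
    Nat.card H =
      Nat.card (H.comap (MonoidHom.inl A B)) * Nat.card (H.map (MonoidHom.snd A B)) := by
  set f : H →* B := (MonoidHom.snd A B).comp H.subtype
  have hrange : f.range = H.map (MonoidHom.snd A B) := by
    rw [MonoidHom.range_comp, range_subtype]
  let kerEquiv : f.ker ≃ H.comap (MonoidHom.inl A B) :=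
    { toFun := fun x => ⟨x.1.1.1, by
        obtain ⟨⟨⟨a, b⟩, hab⟩, hb : b = 1⟩ := x
        subst hb
        exact hab⟩
      invFun := fun a => ⟨⟨(a.1, 1), a.2⟩, rfl⟩
      left_inv := by
        rintro ⟨⟨⟨a, b⟩, hab⟩, hb : b = 1⟩
        subst hb
        rfl
      right_inv := fun _ => rfl }
  rw [← f.ker.card_mul_index, index_ker, hrange, Nat.card_congr kerEquiv]

theorem index_eq_index_comap_inl_mul_index_map_snd [Finite A] [Finite B]
    (H : Subgroup (A × B)) :
    H.index = (H.comap (MonoidHom.inl A B)).index * (H.map (MonoidHom.snd A B)).index := by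
  refine Nat.eq_of_mul_eq_mul_right (Nat.card_pos (α := H)) ?_
  calc H.index * Nat.card H = Nat.card A * Nat.card B := by
        rw [index_mul_card, Nat.card_prod]
    _ = _ := by
        rw [card_eq_card_comap_inl_mul_card_map_snd,
          ← (H.comap (MonoidHom.inl A B)).index_mul_card,
          ← (H.map (MonoidHom.snd A B)).index_mul_card]
        ring

end Subgroup

namespace DoubleCoset

variable {A B : Type*} [Group A] [Group B]

theorem mk_prod_eq_of_rel_comap_inl (UA : Subgroup A) (UB : Subgroup B) (H : Subgroup (A × B))
    {a a' : A} (haa' : setoid (H.comap (MonoidHom.inl A B) : Set A) UA a a') (b : B) :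
    mk H (UA.prod UB) (a, b) = mk H (UA.prod UB) (a', b) := by
  obtain ⟨h, hh, u, hu, rfl⟩ := rel_iff.mp haa'
  refine (eq _ _ _ _).mpr ⟨(h, 1), hh, (u, 1), ⟨hu, UB.one_mem⟩, ?_⟩
  simp

theorem card_quotient_prod_le_mul [Finite A] [Finite B] (UA : Subgroup A) (UB : Subgroup B)
    (H : Subgroup (A × B)) :
    Nat.card (Quotient (H : Set (A × B)) (UA.prod UB)) ≤
      Nat.card (Quotient (H.comap (MonoidHom.inl A B) : Set A) UA) *
        Nat.card (Quotient (H.map (MonoidHom.snd A B) : Set B) UB) := by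
  set HA := H.comap (MonoidHom.inl A B)
  set HB := H.map (MonoidHom.snd A B)
  have : Finite (Quotient (HA : Set A) UA) := Quotient.finite _
  have : Finite (Quotient (HB : Set B) UB) := Quotient.finite _
  let F : Quotient (HA : Set A) UA × Quotient (HB : Set B) UB →
      Quotient (H : Set (A × B)) (UA.prod UB) := fun p =>
    _root_.Quotient.lift (fun a => mk H (UA.prod UB) (a, p.2.out))
      (fun _ _ h => mk_prod_eq_of_rel_comap_inl UA UB H h _) p.1
  rw [← Nat.card_prod]
  refine Nat.card_le_card_of_surjective F ?_
  rintro ⟨a, b⟩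
  obtain ⟨_, ⟨⟨hA, hB⟩, hH, rfl⟩, uB, huB, hb⟩ :=
    (eq HB UB _ _).mp (out_eq' HB UB (mk HB UB b))
  refine ⟨(mk HA UA (hA⁻¹ * a), mk HB UB b),
    (eq _ _ _ _).mpr ⟨(hA, hB), hH, (1, uB), ⟨UA.one_mem, huB⟩, ?_⟩⟩
  ext
  · simp
  · change b = hB * (mk HB UB b).out * uB
    exact hb

end DoubleCoset

/-- Lemma `fibre-chi-inequality`.
Let `Q = A × B` be a product of finite groups, `U = U_A × U_B`, `H ⊆ Q` a
subgroup, `H_A = {a : (a,1) ∈ H}` and `H^B = pr_B(H)`.  Then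
`χ_{Q,U}(H) ≤ χ_{A,U_A}(H_A) · χ_{B,U_B}(H^B)`. -/
theorem statement18 (A B : Type*) [Group A] [Group B] [Finite A] [Finite B]
    (UA : Subgroup A) (UB : Subgroup B) (H : Subgroup (A × B)) :
    chiDoset (A × B) (UA.prod UB) H ≤
      chiDoset A UA (H.comap (MonoidHom.inl A B)) *
        chiDoset B UB (H.map (MonoidHom.snd A B)) := by
  rw [chiDoset, chiDoset, chiDoset, div_mul_div_comm,
    H.index_eq_index_comap_inl_mul_index_map_snd, Nat.cast_mul]
  gcongr
  exact_mod_cast DoubleCoset.card_quotient_prod_le_mul UA UB H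
end
end
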